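/- arXiv:2310.09026 — 3 statements merged into one kernel-verified Lean document; each statement's English description precedes it below -/
import Mathlib

section
/- Let a₀, a₁, α, λ be complex numbers with λ²α ≠ 1, a₀ ≠ 0, and suppose λ satisfies the fixed-point equation λ = (1+a₀²−a₁ ∓ √((1+a₀²−a₁)²−4a₀²))⁻¹·2a₀, i.e., a₀λ² − (1+a₀²−a₁)λ + a₀ = 0. Define d₀ = λ(α−1)/(λ²α−1), d₁ = d₀, d₂ = α(λ²−1)²/(λ²α−1)². Then d₁ + a₀(d₂ − d₀d₁) = a₀ + d₁(a₁ − a₀²). -/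
theorem stmt_2 (a0 a1 alpha lam : ℂ) (h : lam ^ 2 * alpha ≠ 1) (ha0 : a0 ≠ 0)
    (hlam : a0 * lam ^ 2 - (1 + a0 ^ 2 - a1) * lam + a0 = 0)
    (d0 d1 d2 : ℂ)
    (hd0 : d0 = lam * (alpha - 1) / (lam ^ 2 * alpha - 1))
    (hd1 : d1 = d0)
    (hd2 : d2 = alpha * (lam ^ 2 - 1) ^ 2 / (lam ^ 2 * alpha - 1) ^ 2) :
    d1 + a0 * (d2 - d0 * d1) = a0 + d1 * (a1 - a0 ^ 2) := by
  have h' : lam ^ 2 * alpha - 1 ≠ 0 := sub_ne_zero.mpr h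
  subst hd1 hd0 hd2
  have L : lam * (alpha - 1) / (lam ^ 2 * alpha - 1) +
      a0 * (alpha * (lam ^ 2 - 1) ^ 2 / (lam ^ 2 * alpha - 1) ^ 2 -
        lam * (alpha - 1) / (lam ^ 2 * alpha - 1) * (lam * (alpha - 1) / (lam ^ 2 * alpha - 1))) =
      (lam * (alpha - 1) * (lam ^ 2 * alpha - 1) +
        a0 * (alpha * (lam ^ 2 - 1) ^ 2 - (lam * (alpha - 1)) ^ 2)) / (lam ^ 2 * alpha - 1) ^ 2 := by
    field_simp
  have R : a0 + lam * (alpha - 1) / (lam ^ 2 * alpha - 1) * (a1 - a0 ^ 2) =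
      (a0 * (lam ^ 2 * alpha - 1) ^ 2 +
        lam * (alpha - 1) * (lam ^ 2 * alpha - 1) * (a1 - a0 ^ 2)) / (lam ^ 2 * alpha - 1) ^ 2 := by
    field_simp
  rw [L, R]
  congr 1
  linear_combination ((1 - alpha) * (lam ^ 2 * alpha - 1)) * hlam
end

section
/- A linear fractional map φ(z) = (az+b)/(cz+d) with ad−bc ≠ 0 maps the open unit disk 𝔻 into itself if and only if |b·conj(d) − a·conj(c)| + |ad − bc| ≤ |d|² − |c|². -/
open ComplexConjugate

/-!
Put `W = ‖d‖² - ‖c‖²`, `X = b d̄ - a c̄`, `Y = ad - bc`. Then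
`W (az + b) = X (cz + d) + Y (c̄ + d̄ z)` and `‖cz + d‖² = ‖c̄ + d̄ z‖² + W (1 - ‖z‖²)`.
If `‖X‖ + ‖Y‖ ≤ W`, then `W > 0`, so `‖c̄ + d̄ z‖ < ‖cz + d‖` on the disk, and the triangle inequality
gives `‖az + b‖ < ‖cz + d‖`. Conversely, if `φ` maps the disk into itself, its pole `-d/c` lies
outside the closed disk, so `W > 0`; then `z ↦ (c̄ + d̄ z) / (cz + d)` maps the unit circle onto
itself, and choosing `z` where this quotient aligns `Y (c̄ + d̄ z)` with `X (cz + d)` turns the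
triangle inequality above into an equality, forcing `‖X‖ + ‖Y‖ ≤ W`.
-/

open Complex

theorem ne_zero_and_norm_div_lt_one_iff {𝕜 : Type*} [NormedDivisionRing 𝕜] (u w : 𝕜) :
    w ≠ 0 ∧ ‖u / w‖ < 1 ↔ ‖u‖ < ‖w‖ := by
  refine ⟨fun ⟨hw, hlt⟩ => ?_, fun hlt => ?_⟩
  · rwa [norm_div, div_lt_one (norm_pos_iff.mpr hw)] at hlt
  · have hw : 0 < ‖w‖ := (norm_nonneg u).trans_lt hlt
    exact ⟨norm_pos_iff.mp hw, by rwa [norm_div, div_lt_one hw]⟩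

theorem le_of_forall_norm_lt_one {E : Type*} [NormedAddCommGroup E] [NormedSpace ℝ E]
    {f g : E → ℝ} (hf : Continuous f) (hg : Continuous g)
    (hle : ∀ z, ‖z‖ < 1 → f z ≤ g z) {z : E} (hz : ‖z‖ ≤ 1) : f z ≤ g z := by
  have hz' : z ∈ closure (Metric.ball 0 1) := by
    rwa [closure_ball 0 one_ne_zero, mem_closedBall_zero_iff]
  exact le_on_closure (fun w hw => hle w (mem_ball_zero_iff.mp hw))
    hf.continuousOn hg.continuousOn hz'

theorem exists_norm_eq_one_norm_add_mul_eq (X Y : ℂ) :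
    ∃ μ : ℂ, ‖μ‖ = 1 ∧ ‖X + Y * μ‖ = ‖X‖ + ‖Y‖ := by
  refine ⟨exp ((arg X - arg Y : ℝ) * I), norm_exp_ofReal_mul_I _, ?_⟩
  have hY : Y * exp ((arg X - arg Y : ℝ) * I) = ‖Y‖ * exp (arg X * I) := by
    calc Y * exp ((arg X - arg Y : ℝ) * I)
        = ‖Y‖ * (exp (arg Y * I) * exp ((arg X - arg Y : ℝ) * I)) := by
          rw [← mul_assoc, norm_mul_exp_arg_mul_I]
      _ = ‖Y‖ * exp (arg X * I) := by
          rw [← exp_add]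
          push_cast
          ring_nf
  have hsum : X + Y * exp ((arg X - arg Y : ℝ) * I) = ((‖X‖ + ‖Y‖ : ℝ) : ℂ) * exp (arg X * I) := by
    rw [hY]
    nth_rewrite 1 [← norm_mul_exp_arg_mul_I X]
    push_cast
    ring
  rw [hsum, norm_mul, norm_exp_ofReal_mul_I, mul_one, norm_real, Real.norm_of_nonneg (by positivity)]

theorem sq_norm_mul_add (c d z : ℂ) :
    ‖c * z + d‖ ^ 2 = ‖conj c + conj d * z‖ ^ 2 + (‖d‖ ^ 2 - ‖c‖ ^ 2) * (1 - ‖z‖ ^ 2) := by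
  simp only [Complex.sq_norm, normSq_apply, add_re, add_im, mul_re, mul_im, conj_re, conj_im]
  ring

theorem ofReal_sq_norm_sub_mul_mul_add (a b c d z : ℂ) :
    ((‖d‖ ^ 2 - ‖c‖ ^ 2 : ℝ) : ℂ) * (a * z + b) =
      (b * conj d - a * conj c) * (c * z + d) + (a * d - b * c) * (conj c + conj d * z) := by
  push_cast
  rw [← mul_conj', ← mul_conj']
  ring

section LinearFractional

variable {a b c d : ℂ}

theorem exists_norm_eq_one_conj_add_eq_mul (hcd : ‖c‖ < ‖d‖) {μ : ℂ} (hμ : ‖μ‖ = 1) :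
    ∃ z : ℂ, ‖z‖ = 1 ∧ conj c + conj d * z = μ * (c * z + d) := by
  have hden : conj d - μ * c ≠ 0 := by
    rw [sub_ne_zero]
    intro heq
    have := congrArg norm heq
    rw [RCLike.norm_conj, norm_mul, hμ, one_mul] at this
    exact hcd.ne' this
  set z := (μ * d - conj c) / (conj d - μ * c)
  have hz : conj c + conj d * z = μ * (c * z + d) := by
    simp only [z]
    field_simp
    ring
  refine ⟨z, ?_, hz⟩
  have hsq := sq_norm_mul_add c d z
  rw [hz, norm_mul, hμ, one_mul] at hsq
  have hW : 0 < ‖d‖ ^ 2 - ‖c‖ ^ 2 := by nlinarith [norm_nonneg c]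
  exact (pow_eq_one_iff_of_nonneg (norm_nonneg z) two_ne_zero).mp (by nlinarith)

theorem norm_mul_add_lt_of_add_norm_le (h : a * d - b * c ≠ 0)
    (hR : ‖b * conj d - a * conj c‖ + ‖a * d - b * c‖ ≤ ‖d‖ ^ 2 - ‖c‖ ^ 2)
    {z : ℂ} (hz : ‖z‖ < 1) : ‖a * z + b‖ < ‖c * z + d‖ := by
  set W := ‖d‖ ^ 2 - ‖c‖ ^ 2
  set X := b * conj d - a * conj c
  set Y := a * d - b * c
  have hY : 0 < ‖Y‖ := norm_pos_iff.mpr h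
  have hW : 0 < W := by linarith [norm_nonneg X]
  have hconj : ‖conj c + conj d * z‖ < ‖c * z + d‖ := by
    refine lt_of_pow_lt_pow_left₀ 2 (norm_nonneg _) ?_
    have : 0 < W * (1 - ‖z‖ ^ 2) := mul_pos hW (by nlinarith [norm_nonneg z])
    linarith [sq_norm_mul_add c d z]
  have hWnorm : W * ‖a * z + b‖ = ‖X * (c * z + d) + Y * (conj c + conj d * z)‖ := by
    rw [← ofReal_sq_norm_sub_mul_mul_add, norm_mul, norm_real, Real.norm_of_nonneg hW.le]
  have : W * ‖a * z + b‖ < W * ‖c * z + d‖ :=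
    calc W * ‖a * z + b‖
        ≤ ‖X‖ * ‖c * z + d‖ + ‖Y‖ * ‖conj c + conj d * z‖ := by
          rw [hWnorm, ← norm_mul, ← norm_mul]
          exact norm_add_le _ _
      _ < ‖X‖ * ‖c * z + d‖ + ‖Y‖ * ‖c * z + d‖ := by gcongr
      _ ≤ W * ‖c * z + d‖ := by
          rw [← add_mul]
          exact mul_le_mul_of_nonneg_right hR (norm_nonneg _)
  exact lt_of_mul_lt_mul_left this hW.le

theorem norm_lt_of_forall_norm_mul_add_le (h : a * d - b * c ≠ 0)
    (hle : ∀ z : ℂ, ‖z‖ ≤ 1 → ‖a * z + b‖ ≤ ‖c * z + d‖) : ‖c‖ < ‖d‖ := by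
  by_contra! hdc
  have hc : c ≠ 0 := by
    rintro rfl
    simp_all
  -- The pole `-d / c` would lie in the closed disk, where `a z + b` would have to vanish too.
  have hpole := hle (-d / c) (by rwa [norm_div, norm_neg, div_le_one (norm_pos_iff.mpr hc)])
  rw [show c * (-d / c) + d = 0 by field_simp; ring, norm_zero, norm_le_zero_iff] at hpole
  have hY : a * d - b * c = -c * (a * (-d / c) + b) := by field_simp; ring
  exact h (by rw [hY, hpole, mul_zero])

theorem add_norm_le_of_forall_norm_mul_add_le (hcd : ‖c‖ < ‖d‖)
    (hle : ∀ z : ℂ, ‖z‖ ≤ 1 → ‖a * z + b‖ ≤ ‖c * z + d‖) :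
    ‖b * conj d - a * conj c‖ + ‖a * d - b * c‖ ≤ ‖d‖ ^ 2 - ‖c‖ ^ 2 := by
  set W := ‖d‖ ^ 2 - ‖c‖ ^ 2
  set X := b * conj d - a * conj c
  set Y := a * d - b * c
  have hW : 0 ≤ W := by nlinarith [norm_nonneg c]
  obtain ⟨μ, hμ, hXY⟩ := exists_norm_eq_one_norm_add_mul_eq X Y
  obtain ⟨z, hz, hzμ⟩ := exists_norm_eq_one_conj_add_eq_mul hcd hμ
  have hD : 0 < ‖c * z + d‖ := by
    have := norm_sub_le_norm_add d (c * z)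
    rw [norm_mul, hz, mul_one, add_comm] at this
    linarith
  have hnorm : W * ‖a * z + b‖ = (‖X‖ + ‖Y‖) * ‖c * z + d‖ := by
    have := congrArg norm (ofReal_sq_norm_sub_mul_mul_add a b c d z)
    rwa [norm_mul, norm_real, Real.norm_of_nonneg hW, hzμ, ← mul_assoc, ← add_mul, norm_mul,
      hXY] at this
  have : (‖X‖ + ‖Y‖) * ‖c * z + d‖ ≤ W * ‖c * z + d‖ :=
    hnorm ▸ mul_le_mul_of_nonneg_left (hle z hz.le) hW
  exact le_of_mul_le_mul_right this hD

end LinearFractional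

theorem stmt_12 (a b c d : ℂ) (h : a * d - b * c ≠ 0) :
    (∀ z : ℂ, ‖z‖ < 1 → c * z + d ≠ 0 ∧ ‖(a * z + b) / (c * z + d)‖ < 1)
      ↔ ‖b * conj d - a * conj c‖ + ‖a * d - b * c‖ ≤ ‖d‖ ^ 2 - ‖c‖ ^ 2 := by
  simp only [ne_zero_and_norm_div_lt_one_iff]
  refine ⟨fun hlt => ?_, fun hR z hz => norm_mul_add_lt_of_add_norm_le h hR hz⟩
  have hle : ∀ z : ℂ, ‖z‖ ≤ 1 → ‖a * z + b‖ ≤ ‖c * z + d‖ := fun z =>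
    le_of_forall_norm_lt_one (by fun_prop) (by fun_prop) fun w hw => (hlt w hw).le
  exact add_norm_le_of_forall_norm_mul_add_le (norm_lt_of_forall_norm_mul_add_le h hle) hle
end

section
/- Let a₀, a₁ ∈ ℂ and φ(z) = a₀ + a₁z/(1 − a₀z). Then φ maps the open unit disk into itself if and only if |a₀| < 1 and 2|a₀ + conj(a₀)·(a₁ − a₀²)| ≤ 1 − |a₁ − a₀²|². -/
/-!
With `b = a₁ - a₀²` and `c = a₀ + conj a₀ * b` we have `φ z = (a₀ + b z) / (1 - a₀ z)`, and
`|φ z| < 1` is equivalent to `2 Re (c z) < 1 - |a₀|² + (|a₀|² - |b|²) |z|²`. On the circle `|z| = r`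
the left side attains its maximum `2 |c| r`, so the condition is the positivity of a real quadratic
`q` on `[0, 1)`. Letting `r → 1` gives necessity. For sufficiency,
`q r = (1 - r) ((1 - r) (1 - |a₀|²) + r (1 + |b|² - 2 |a₀|²)) + r q 1`, and `2 |a₀|² ≤ 1 + |b|²`
follows from `|a₀| (1 - |b|) ≤ |c|` together with `2 |c| ≤ 1 - |b|²`.
-/

open ComplexConjugate

open Complex in
theorem norm_one_sub_mul_sq_sub_norm_add_mul_sq (a b z : ℂ) :
    ‖1 - a * z‖ ^ 2 - ‖a + b * z‖ ^ 2
      = 1 - ‖a‖ ^ 2 + (‖a‖ ^ 2 - ‖b‖ ^ 2) * ‖z‖ ^ 2 - 2 * ((a + conj a * b) * z).re := by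
  simp only [← normSq_eq_norm_sq, normSq_apply, add_re, add_im, mul_re, mul_im, sub_re, sub_im,
    conj_re, conj_im, one_re, one_im]
  ring

theorem one_sub_mul_ne_zero_of_norm_lt_one {a z : ℂ} (ha : ‖a‖ < 1) (hz : ‖z‖ < 1) :
    1 - a * z ≠ 0 := by
  refine sub_ne_zero.2 fun h => ?_
  have : ‖a * z‖ < 1 := by
    rw [norm_mul]
    exact mul_lt_one_of_nonneg_of_lt_one_left (norm_nonneg a) ha hz.le
  rw [← h, norm_one] at this
  exact this.false

theorem norm_add_mul_div_one_sub_lt_one_iff (a0 a1 z : ℂ) (h : 1 - a0 * z ≠ 0) :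
    ‖a0 + a1 * z / (1 - a0 * z)‖ < 1 ↔
      2 * ((a0 + conj a0 * (a1 - a0 ^ 2)) * z).re
        < 1 - ‖a0‖ ^ 2 + (‖a0‖ ^ 2 - ‖a1 - a0 ^ 2‖ ^ 2) * ‖z‖ ^ 2 := by
  have hφ : a0 + a1 * z / (1 - a0 * z) = (a0 + (a1 - a0 ^ 2) * z) / (1 - a0 * z) := by
    field_simp
    ring
  rw [hφ, norm_div, div_lt_one (norm_pos_iff.2 h), ← sq_lt_sq₀ (norm_nonneg _) (norm_nonneg _),
    ← sub_pos, norm_one_sub_mul_sq_sub_norm_add_mul_sq, sub_pos]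

theorem exists_norm_eq_re_mul_eq (c : ℂ) {r : ℝ} (hr : 0 ≤ r) :
    ∃ z : ℂ, ‖z‖ = r ∧ (c * z).re = ‖c‖ * r := by
  refine ⟨r * Complex.exp (-(c.arg : ℂ) * Complex.I), ?_, ?_⟩
  · rw [norm_mul, ← Complex.ofReal_neg, Complex.norm_exp_ofReal_mul_I, Complex.norm_real,
      Real.norm_of_nonneg hr, mul_one]
  · have : c * (r * Complex.exp (-(c.arg : ℂ) * Complex.I)) = ((‖c‖ * r : ℝ) : ℂ) := by
      nth_rewrite 1 [← Complex.norm_mul_exp_arg_mul_I c]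
      rw [mul_mul_mul_comm, ← Complex.exp_add, neg_mul, add_neg_cancel, Complex.exp_zero, mul_one,
        Complex.ofReal_mul]
    rw [this, Complex.ofReal_re]

theorem two_mul_sq_le_one_add_sq {X B C : ℝ} (hX0 : 0 ≤ X) (hX1 : X < 1) (hB : 0 ≤ B)
    (hXC : X * (1 - B) ≤ C) (hC : 2 * C ≤ 1 - B ^ 2) : 2 * X ^ 2 ≤ 1 + B ^ 2 := by
  rcases lt_or_ge B 1 with hB1 | hB1
  · have h2X : 2 * X ≤ 1 + B := le_of_mul_le_mul_right (by nlinarith) (sub_pos.2 hB1)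
    nlinarith [sq_nonneg (1 - B)]
  · nlinarith

theorem quadratic_pos_of_lt_one {X B C r : ℝ} (hX : X ^ 2 < 1) (hXB : 2 * X ^ 2 ≤ 1 + B ^ 2)
    (hC : 2 * C ≤ 1 - B ^ 2) (hr0 : 0 ≤ r) (hr1 : r < 1) :
    2 * C * r < 1 - X ^ 2 + (X ^ 2 - B ^ 2) * r ^ 2 := by
  have hP : 0 < (1 - r) * (1 - X ^ 2) + r * (1 + B ^ 2 - 2 * X ^ 2) := by
    nlinarith [mul_nonneg hr0 (sub_nonneg.2 hXB)]
  nlinarith [mul_pos (sub_pos.2 hr1) hP, mul_nonneg hr0 (sub_nonneg.2 hC)]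

theorem le_of_forall_mem_Ico_lt {f g : ℝ → ℝ} (hf : Continuous f) (hg : Continuous g) {a b : ℝ}
    (hab : a < b) (h : ∀ r ∈ Set.Ico a b, f r < g r) : f b ≤ g b := by
  have hsub : Set.Ico a b ⊆ {r | f r ≤ g r} := fun r hr => (h r hr).le
  have := (isClosed_le hf hg).closure_subset_iff.2 hsub
  rw [closure_Ico hab.ne] at this
  exact this (Set.right_mem_Icc.2 hab.le)

theorem stmt_13 (a0 a1 : ℂ) :
    (∀ z : ℂ, ‖z‖ < 1 → ‖a0 + a1 * z / (1 - a0 * z)‖ < 1)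
      ↔ (‖a0‖ < 1 ∧ 2 * ‖a0 + conj a0 * (a1 - a0 ^ 2)‖ ≤ 1 - ‖a1 - a0 ^ 2‖ ^ 2) := by
  set b := a1 - a0 ^ 2
  set c := a0 + conj a0 * b
  constructor
  · intro h
    have hX : ‖a0‖ < 1 := by simpa using h 0 (by simp)
    have hr : ∀ r ∈ Set.Ico (0 : ℝ) 1, 2 * ‖c‖ * r < 1 - ‖a0‖ ^ 2 + (‖a0‖ ^ 2 - ‖b‖ ^ 2) * r ^ 2 := by
      rintro r ⟨hr0, hr1⟩
      obtain ⟨z, hz, hcz⟩ := exists_norm_eq_re_mul_eq c hr0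
      have := (norm_add_mul_div_one_sub_lt_one_iff a0 a1 z
        (one_sub_mul_ne_zero_of_norm_lt_one hX (hz ▸ hr1))).1 (h z (hz ▸ hr1))
      rwa [hcz, hz, ← mul_assoc] at this
    have := le_of_forall_mem_Ico_lt (by fun_prop) (by fun_prop) zero_lt_one hr
    exact ⟨hX, by linarith⟩
  · rintro ⟨hX, hc⟩ z hz
    rw [norm_add_mul_div_one_sub_lt_one_iff a0 a1 z (one_sub_mul_ne_zero_of_norm_lt_one hX hz)]
    have hXc : ‖a0‖ * (1 - ‖b‖) ≤ ‖c‖ := by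
      have := norm_sub_le c (conj a0 * b)
      rw [add_sub_cancel_right, norm_mul, Complex.norm_conj] at this
      linarith
    calc 2 * (c * z).re ≤ 2 * ‖c‖ * ‖z‖ := by
          rw [mul_assoc, ← norm_mul]
          exact mul_le_mul_of_nonneg_left (Complex.re_le_norm _) zero_le_two
      _ < _ := quadratic_pos_of_lt_one (by nlinarith [norm_nonneg a0])
          (two_mul_sq_le_one_add_sq (norm_nonneg _) hX (norm_nonneg _) hXc hc) hc
          (norm_nonneg _) hz
end
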